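/- Let B(t) = (1 - 2t - sqrt(1-4t))/(2t), extended analytically to the slit plane D = C \ [1/4, infinity). Then B is a bounded analytic function on D; it is real exactly for t in (-infinity, 1/4], and on that interval B is strictly increasing from -1 (limit at -infinity) to B(1/4) = 1. -/

import Mathlib

/-!
With `s = √(1 - 4t)` one has `s² = 1 - 4t`, so `B = (1 - s) / (1 + s)`, a form without the
apparent singularity at `t = 0`. On `D` the square root has positive real part, and the Cayley
transform `s ↦ (1 - s) / (1 + s)` maps the right half-plane into the unit disc, so `‖B‖ ≤ 1`;
it is real exactly when `s` is, i.e. when `1 - 4t ≥ 0`. On the real axis `s = √(1 - 4x)`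
decreases from `∞` to `0` while `y ↦ (1 - y) / (1 + y)` decreases from `1` to `-1`.
-/

open Filter Topology

/-- The slit plane `D = ℂ \ [1/4, ∞)`. -/
def slitPlane14 : Set ℂ := {t : ℂ | ¬ (t.im = 0 ∧ 1/4 ≤ t.re)}

namespace Complex

lemma re_cpow_inv_two_pos {z : ℂ} (hz : z ∈ slitPlane) : 0 < (z ^ (2⁻¹ : ℂ)).re := by
  rw [cpow_inv_two_re, Real.sqrt_pos]
  rcases mem_slitPlane_iff.1 hz with hre | him
  · linarith [norm_nonneg z]
  · linarith [abs_re_lt_norm.2 him, neg_abs_le z.re]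

lemma one_add_cpow_inv_two_ne_zero {z : ℂ} (hz : z ∈ slitPlane) : 1 + z ^ (2⁻¹ : ℂ) ≠ 0 := by
  intro h
  have := congrArg re h
  simp only [add_re, one_re, zero_re] at this
  linarith [re_cpow_inv_two_pos hz]

lemma cpow_inv_two_sq (z : ℂ) : (z ^ (2⁻¹ : ℂ)) ^ 2 = z := by
  exact_mod_cast cpow_nat_inv_pow z two_ne_zero

lemma ofReal_cpow_inv_two {x : ℝ} (hx : 0 ≤ x) : (x : ℂ) ^ (2⁻¹ : ℂ) = (√x : ℝ) := by
  rw [← ofReal_ofNat, ← ofReal_inv, ← ofReal_cpow hx, Real.sqrt_eq_rpow, one_div]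

noncomputable def cayley (s : ℂ) : ℂ := (1 - s) / (1 + s)

lemma norm_cayley_le_one {s : ℂ} (hs : 0 ≤ s.re) : ‖cayley s‖ ≤ 1 := by
  rcases eq_or_ne (1 + s) 0 with h | h
  · simp [cayley, h]
  rw [cayley, norm_div, div_le_one (norm_pos_iff.2 h), ← sq_le_sq₀ (norm_nonneg _) (norm_nonneg _),
    ← normSq_eq_norm_sq, ← normSq_eq_norm_sq]
  simp only [normSq_apply, sub_re, sub_im, add_re, add_im, one_re, one_im]
  nlinarith

lemma im_cayley (s : ℂ) : (cayley s).im = -2 * s.im / normSq (1 + s) := by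
  rw [cayley, div_im]
  simp only [sub_re, sub_im, add_re, add_im, one_re, one_im]
  ring

lemma im_cayley_eq_zero_iff (s : ℂ) : (cayley s).im = 0 ↔ s.im = 0 := by
  rw [im_cayley, div_eq_zero_iff, normSq_eq_zero, add_eq_zero_iff_eq_neg']
  constructor
  · rintro (h | rfl)
    · linarith
    · simp
  · exact fun h ↦ Or.inl (by rw [h]; ring)

lemma cayley_ofReal (y : ℝ) : cayley y = ((1 - y) / (1 + y) : ℝ) := by
  push_cast [cayley]; rfl

end Complex

lemma strictAntiOn_one_sub_div_one_add :
    StrictAntiOn (fun y : ℝ ↦ (1 - y) / (1 + y)) (Set.Ioi (-1)) := by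
  intro x hx y hy hxy
  simp only [Set.mem_Ioi] at hx hy
  rw [div_lt_div_iff₀ (by linarith) (by linarith)]
  nlinarith

lemma one_sub_div_one_add_mem_Ioo {y : ℝ} (hy : 0 < y) : (1 - y) / (1 + y) ∈ Set.Ioo (-1) 1 := by
  constructor
  · rw [lt_div_iff₀ (by linarith)]; linarith
  · rw [div_lt_one (by linarith)]; linarith

lemma tendsto_one_sub_div_one_add_atTop :
    Tendsto (fun y : ℝ ↦ (1 - y) / (1 + y)) atTop (𝓝 (-1)) := by
  have h : Tendsto (fun y : ℝ ↦ 2 / (1 + y) - 1) atTop (𝓝 (0 - 1)) :=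
    (tendsto_const_nhds.div_atTop (tendsto_atTop_add_const_left _ 1 tendsto_id)).sub_const 1
  rw [zero_sub] at h
  refine h.congr' ?_
  filter_upwards [eventually_gt_atTop 0] with y hy
  field_simp
  ring

lemma tendsto_sqrt_one_sub_four_mul_atBot :
    Tendsto (fun x : ℝ ↦ √(1 - 4 * x)) atBot atTop := by
  refine Real.tendsto_sqrt_atTop.comp (tendsto_atBot_atTop.2 fun b ↦ ⟨(1 - b) / 4, fun x hx ↦ ?_⟩)
  linarith

lemma mem_slitPlane14_iff {t : ℂ} : t ∈ slitPlane14 ↔ 1 - 4 * t ∈ Complex.slitPlane := by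
  have hre : (1 - 4 * t).re = 1 - 4 * t.re := by simp
  have him : (1 - 4 * t).im = -(4 * t.im) := by simp
  rw [slitPlane14, Set.mem_ofPred_eq, Complex.mem_slitPlane_iff, hre, him]
  grind

/-- `B = t C(t)²`, where `C` is the generating function of the Catalan numbers. -/
noncomputable def catalanB (t : ℂ) : ℂ := Complex.cayley ((1 - 4 * t) ^ (2⁻¹ : ℂ))

lemma analyticOnNhd_catalanB : AnalyticOnNhd ℂ catalanB slitPlane14 := by
  have hsqrt : AnalyticOnNhd ℂ (fun t : ℂ ↦ (1 - 4 * t) ^ (2⁻¹ : ℂ)) slitPlane14 :=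
    (analyticOnNhd_const.sub (analyticOnNhd_const.mul analyticOnNhd_id)).cpow analyticOnNhd_const
      fun _ ↦ mem_slitPlane14_iff.1
  exact (analyticOnNhd_const.sub hsqrt).div (analyticOnNhd_const.add hsqrt)
    fun _ ht ↦ Complex.one_add_cpow_inv_two_ne_zero (mem_slitPlane14_iff.1 ht)

lemma norm_catalanB_le_one {t : ℂ} (ht : t ∈ slitPlane14) : ‖catalanB t‖ ≤ 1 :=
  Complex.norm_cayley_le_one (Complex.re_cpow_inv_two_pos (mem_slitPlane14_iff.1 ht)).le

lemma catalanB_eq {t : ℂ} (ht : t ∈ slitPlane14) (h0 : t ≠ 0) :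
    catalanB t = (1 - 2 * t - (1 - 4 * t) ^ ((1 : ℂ) / 2)) / (2 * t) := by
  have hs := Complex.cpow_inv_two_sq (1 - 4 * t)
  rw [catalanB, Complex.cayley, one_div, div_eq_div_iff
    (Complex.one_add_cpow_inv_two_ne_zero (mem_slitPlane14_iff.1 ht)) (by simpa using h0)]
  linear_combination hs

lemma im_catalanB_eq_zero_iff {t : ℂ} (ht : t ∈ slitPlane14) :
    (catalanB t).im = 0 ↔ t.im = 0 ∧ t.re ≤ 1 / 4 := by
  rw [catalanB, Complex.im_cayley_eq_zero_iff]
  constructor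
  · intro him
    obtain ⟨hre, him'⟩ : ((1 - 4 * t) ^ (2⁻¹ : ℂ)).re ^ 2 = 1 - 4 * t.re ∧ t.im = 0 := by
      simpa [pow_two, him] using Complex.ext_iff.1 (Complex.cpow_inv_two_sq (1 - 4 * t))
    exact ⟨him', by nlinarith [sq_nonneg ((1 - 4 * t) ^ (2⁻¹ : ℂ)).re]⟩
  · rintro ⟨him, hre⟩
    have ht' : t = (t.re : ℂ) := Complex.ext rfl (by simpa using him)
    have hre' : t.re < 1 / 4 := lt_of_le_of_ne hre fun h ↦ ht ⟨him, h.ge⟩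
    rw [ht', ← Complex.ofReal_ofNat, ← Complex.ofReal_one, ← Complex.ofReal_mul,
      ← Complex.ofReal_sub, Complex.ofReal_cpow_inv_two (by linarith), Complex.ofReal_im]

lemma re_catalanB_ofReal {x : ℝ} (hx : x ≤ 1 / 4) :
    (catalanB x).re = (1 - √(1 - 4 * x)) / (1 + √(1 - 4 * x)) := by
  have : (1 - 4 * x : ℂ) = (1 - 4 * x : ℝ) := by push_cast; ring
  rw [catalanB, this, Complex.ofReal_cpow_inv_two (by linarith), Complex.cayley_ofReal,
    Complex.ofReal_re]

lemma strictMonoOn_re_catalanB :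
    StrictMonoOn (fun x : ℝ ↦ (catalanB x).re) (Set.Iio (1 / 4)) := by
  intro x hx y hy hxy
  simp only [Set.mem_Iio] at hx hy
  have hsqrt_mem (z : ℝ) : √z ∈ Set.Ioi (-1) := lt_of_lt_of_le (by norm_num) (Real.sqrt_nonneg z)
  dsimp only
  rw [re_catalanB_ofReal hx.le, re_catalanB_ofReal hy.le]
  exact strictAntiOn_one_sub_div_one_add (hsqrt_mem _) (hsqrt_mem _)
    (Real.sqrt_lt_sqrt (by linarith) (by linarith))

lemma re_catalanB_mem_Ioo {x : ℝ} (hx : x < 1 / 4) : (catalanB x).re ∈ Set.Ioo (-1) 1 := by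
  rw [re_catalanB_ofReal hx.le]
  exact one_sub_div_one_add_mem_Ioo (Real.sqrt_pos.2 (by linarith))

lemma tendsto_re_catalanB_atBot : Tendsto (fun x : ℝ ↦ (catalanB x).re) atBot (𝓝 (-1)) := by
  refine (tendsto_one_sub_div_one_add_atTop.comp tendsto_sqrt_one_sub_four_mul_atBot).congr' ?_
  filter_upwards [eventually_le_atBot (1 / 4)] with x hx
  exact (re_catalanB_ofReal hx).symm

lemma tendsto_re_catalanB_nhdsLT :
    Tendsto (fun x : ℝ ↦ (catalanB x).re) (𝓝[<] (1 / 4)) (𝓝 1) := by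
  have hcont : ContinuousAt (fun x : ℝ ↦ (1 - √(1 - 4 * x)) / (1 + √(1 - 4 * x))) (1 / 4) := by
    fun_prop (disch := norm_num)
  have hval : (1 - √(1 - 4 * (1 / 4 : ℝ))) / (1 + √(1 - 4 * (1 / 4))) = 1 := by norm_num
  have h := hcont.tendsto
  rw [hval] at h
  refine (tendsto_nhdsWithin_of_tendsto_nhds h).congr' ?_
  filter_upwards [self_mem_nhdsWithin] with x hx
  exact (re_catalanB_ofReal (le_of_lt hx)).symm

/-- `B(t) = (1 - 2t - √(1-4t))/(2t)` (principal square root) extends to a bounded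
analytic function on the slit plane `D = ℂ \ [1/4,∞)`; it is real exactly for `t` real
(in `D`, i.e. `t ∈ (-∞, 1/4)`), and on `(-∞, 1/4)` it is strictly increasing, with
limit `-1` at `-∞` and boundary value `B(1/4) = 1`, staying in `(-1, 1)`. -/
theorem B_analytic_bounded_real_monotone :
    ∃ B : ℂ → ℂ,
      AnalyticOnNhd ℂ B slitPlane14 ∧
      (∃ M : ℝ, ∀ t ∈ slitPlane14, ‖B t‖ ≤ M) ∧
      (∀ t ∈ slitPlane14, t ≠ 0 →
        B t = (1 - 2*t - (1 - 4*t) ^ ((1:ℂ)/2)) / (2*t)) ∧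
      (∀ t ∈ slitPlane14, ((B t).im = 0 ↔ (t.im = 0 ∧ t.re ≤ 1/4))) ∧
      StrictMonoOn (fun x : ℝ => (B x).re) (Set.Iio (1/4)) ∧
      (∀ x : ℝ, x < 1/4 → -1 < (B x).re ∧ (B x).re < 1) ∧
      Tendsto (fun x : ℝ => (B x).re) atBot (𝓝 (-1)) ∧
      Tendsto (fun x : ℝ => (B x).re) (𝓝[Set.Iio (1/4)] (1/4)) (𝓝 1) :=
  ⟨catalanB, analyticOnNhd_catalanB, ⟨1, fun _ ↦ norm_catalanB_le_one⟩, fun _ ↦ catalanB_eq,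
    fun _ ↦ im_catalanB_eq_zero_iff, strictMonoOn_re_catalanB, fun _ ↦ re_catalanB_mem_Ioo,
    tendsto_re_catalanB_atBot, tendsto_re_catalanB_nhdsLT⟩
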